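/- Let k be a field of characteristic p > 0, e ≥ 1 and m' ≥ 1 with p ∤ m', and set m = p^e·m'. Let u ∈ k[[t]] with u ≡ 1 (mod t). If u^m ≡ 1 (mod t^n) for some n ≥ 1, then u ≡ 1 (mod t^⌈n/p^e⌉). -/

import Mathlib

/-!
Since `p ∤ m'`, the geometric sum `1 + u + ⋯ + u^(m'-1)` has constant coefficient `m' ≠ 0`, so
`u^m' - 1` and `u - 1` differ by a unit. Frobenius turns `u^(p^e m') - 1` into `(u^m' - 1)^(p^e)`,
whose order is `p^e` times that of `u^m' - 1`; so that order is at least `⌈n / p^e⌉`.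
-/

namespace PowerSeries

variable {R : Type*}

theorem X_pow_dvd_iff_le_order [Semiring R] {f : R⟦X⟧} {n : ℕ} :
    X ^ n ∣ f ↔ (n : ℕ∞) ≤ f.order := by
  rw [order_eq_emultiplicity_X, pow_dvd_iff_le_emultiplicity]

theorem X_pow_dvd_of_X_pow_dvd_pow [CommRing R] [IsDomain R] {f : R⟦X⟧} {n q : ℕ}
    (h : X ^ n ∣ f ^ q) : X ^ ((n + q - 1) / q) ∣ f := by
  rcases Nat.eq_zero_or_pos q with rfl | hq
  · simp
  rw [X_pow_dvd_iff_le_order, order_pow] at h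
  rw [X_pow_dvd_iff_le_order]
  cases hf : f.order with
  | top => exact le_top
  | coe r =>
    rw [hf, nsmul_eq_mul, ← Nat.cast_mul, Nat.cast_le] at h
    rw [Nat.cast_le, Nat.div_le_iff_le_mul_add_pred hq]
    omega

theorem associated_sub_one_pow_sub_one [CommRing R] {u : R⟦X⟧} (hu : constantCoeff u = 1)
    {m : ℕ} (hm : IsUnit (m : R)) : Associated (u - 1) (u ^ m - 1) := by
  have hgeom : IsUnit (∑ i ∈ Finset.range m, u ^ i) := by
    simpa [isUnit_iff_constantCoeff, map_sum, hu] using hm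
  exact ⟨hgeom.unit, by rw [IsUnit.unit_spec, mul_comm, geom_sum_mul]⟩

end PowerSeries

open PowerSeries in
theorem power_series_root_of_unity_congruence_general {k : Type*} [Field k] (p : ℕ) [CharP k p]
    (hp : 0 < p) (e m' : ℕ) (hpm' : ¬ p ∣ m')
    (u : PowerSeries k) (hu : PowerSeries.constantCoeff u = 1)
    (n : ℕ)
    (hdvd : (PowerSeries.X : PowerSeries k) ^ n ∣ u ^ (p ^ e * m') - 1) :
    (PowerSeries.X : PowerSeries k) ^ ((n + p ^ e - 1) / p ^ e) ∣ u - 1 := by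
  have : NeZero p := ⟨hp.ne'⟩
  have := CharP.char_is_prime_of_pos k p
  have := charP_of_injective_algebraMap' k (A := k⟦X⟧) p
  have hm' : IsUnit (m' : k) := isUnit_iff_ne_zero.mpr (mt (CharP.cast_eq_zero_iff k p m').mp hpm')
  rw [pow_mul', ← one_pow (p ^ e), ← sub_pow_char_pow] at hdvd
  exact (associated_sub_one_pow_sub_one hu hm').dvd_iff_dvd_right.mpr
    (X_pow_dvd_of_X_pow_dvd_pow hdvd)

/-- In characteristic `p > 0`, if `u ∈ k[[t]]`, `u ≡ 1 (mod t)`, `m = p^e·m'` with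
`p ∤ m'`, and `u^m ≡ 1 (mod t^n)`, then `u ≡ 1 (mod t^⌈n/p^e⌉)`. -/
theorem power_series_root_of_unity_congruence {k : Type*} [Field k] (p : ℕ) [CharP k p]
    (hp : 0 < p) (e m' : ℕ) (he : 1 ≤ e) (hm' : 1 ≤ m') (hpm' : ¬ p ∣ m')
    (u : PowerSeries k) (hu : PowerSeries.constantCoeff u = 1)
    (n : ℕ) (hn : 1 ≤ n)
    (hdvd : (PowerSeries.X : PowerSeries k) ^ n ∣ u ^ (p ^ e * m') - 1) :
    (PowerSeries.X : PowerSeries k) ^ ((n + p ^ e - 1) / p ^ e) ∣ u - 1 :=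
  power_series_root_of_unity_congruence_general p hp e m' hpm' u hu n hdvd
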